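/- arXiv:0704.0708 — 3 statements merged into one kernel-verified Lean document; each statement's English description precedes it below -/
import Mathlib

section
/- Let u, v : ℝ^d → ℝ be twice continuously differentiable and let h : ℝ^d → ℝ^d be a continuously differentiable vector field. Then for every x ∈ ℝ^d one has the pointwise identity ⟨∇u(x), A_h(x) ∇v(x)⟩ = ⟨∇(y ↦ ⟨h(y), ∇u(y)⟩)(x), ∇v(x)⟩ + ⟨∇(y ↦ ⟨h(y), ∇v(y)⟩)(x), ∇u(x)⟩ − div(y ↦ ⟨∇u(y), ∇v(y)⟩ h(y))(x). -/
open scoped RealInnerProductSpace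

noncomputable section

abbrev E (d : ℕ) := EuclideanSpace ℝ (Fin d)

/-- Divergence of a vector field: trace of its Jacobian (Fréchet derivative). -/
def vdiv {d : ℕ} (V : E d → E d) (x : E d) : ℝ :=
  LinearMap.trace ℝ (E d) (fderiv ℝ V x).toLinearMap

/-- `A_h(x) = Dh(x) + Dh(x)ᵀ − (div h(x)) I`. -/
def Amat {d : ℕ} (h : E d → E d) (x : E d) : E d →L[ℝ] E d :=
  fderiv ℝ h x + ContinuousLinearMap.adjoint (fderiv ℝ h x) -
    vdiv h x • ContinuousLinearMap.id ℝ (E d)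

/-!
Expand every term by the product rules `∇⟪h, ∇u⟫ · w = ⟪Dh w, ∇u⟫ + ⟪h, D²u w⟫` and
`div (φ h) = φ div h + ⟪∇φ, h⟫`. The terms `⟪h, D²u ∇v⟫` and `⟪h, D²v ∇u⟫` cancel against
`⟪∇φ, h⟫` for `φ = ⟪∇u, ∇v⟫` by the symmetry of the Hessians, and what is left is
`⟪∇u, Dh ∇v⟫ + ⟪Dh ∇u, ∇v⟫ − div h ⟪∇u, ∇v⟫ = ⟪∇u, A_h ∇v⟫`.
-/

section Gradient

variable {F : Type*} [NormedAddCommGroup F] [InnerProductSpace ℝ F] [CompleteSpace F]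

theorem ContDiff.gradient {u : F → ℝ} {m n : WithTop ℕ∞} (hu : ContDiff ℝ n u)
    (hmn : m + 1 ≤ n) : ContDiff ℝ m (gradient u) :=
  (InnerProductSpace.toDual ℝ F).symm.contDiff.comp (hu.fderiv_right hmn)

theorem inner_fderiv_gradient_apply (u : F → ℝ) (x w z : F) :
    ⟪fderiv ℝ (gradient u) x w, z⟫ = fderiv ℝ (fderiv ℝ u) x w z := by
  have hcomp : gradient u = (InnerProductSpace.toDual ℝ F).symm ∘ fderiv ℝ u := rfl
  rw [hcomp, LinearIsometryEquiv.comp_fderiv]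
  exact InnerProductSpace.toDual_symm_apply

theorem inner_fderiv_gradient_comm {u : F → ℝ} {x : F} (hu : ContDiffAt ℝ 2 u x) (w z : F) :
    ⟪fderiv ℝ (gradient u) x w, z⟫ = ⟪w, fderiv ℝ (gradient u) x z⟫ := by
  rw [real_inner_comm _ w, inner_fderiv_gradient_apply, inner_fderiv_gradient_apply]
  exact (hu.isSymmSndFDerivAt (by simp)).eq w z

theorem inner_gradient_inner_apply {h g : F → F} {x : F} (hh : DifferentiableAt ℝ h x)
    (hg : DifferentiableAt ℝ g x) (w : F) :
    ⟪gradient (fun y => ⟪h y, g y⟫) x, w⟫ = ⟪h x, fderiv ℝ g x w⟫ + ⟪fderiv ℝ h x w, g x⟫ := by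
  rw [inner_gradient_left, fderiv_inner_apply ℝ hh hg]

end Gradient

section Divergence

variable {d : ℕ}

theorem vdiv_smul {φ : E d → ℝ} {V : E d → E d} {x : E d} (hφ : DifferentiableAt ℝ φ x)
    (hV : DifferentiableAt ℝ V x) :
    vdiv (fun y => φ y • V y) x = φ x * vdiv V x + fderiv ℝ φ x (V x) := by
  change LinearMap.trace ℝ (E d) (fderiv ℝ (φ • V) x).toLinearMap = _
  rw [fderiv_smul hφ hV, ContinuousLinearMap.toLinearMap_add, map_add,
    ContinuousLinearMap.toLinearMap_smul, map_smul, ContinuousLinearMap.coe_smulRight,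
    LinearMap.trace_smulRight, smul_eq_mul, vdiv]
  rfl

theorem inner_Amat_apply (h : E d → E d) (x a b : E d) :
    ⟪a, Amat h x b⟫ = ⟪a, fderiv ℝ h x b⟫ + ⟪fderiv ℝ h x a, b⟫ - vdiv h x * ⟪a, b⟫ := by
  simp only [Amat, sub_apply, add_apply, smul_apply, ContinuousLinearMap.id_apply]
  rw [inner_sub_right, inner_add_right, real_inner_smul_right,
    ContinuousLinearMap.adjoint_inner_right]

end Divergence

theorem statement0 {d : ℕ} (u v : E d → ℝ) (h : E d → E d)
    (hu : ContDiff ℝ 2 u) (hv : ContDiff ℝ 2 v) (hh : ContDiff ℝ 1 h)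
    (x : E d) :
    ⟪gradient u x, Amat h x (gradient v x)⟫ =
      ⟪gradient (fun y => ⟪h y, gradient u y⟫) x, gradient v x⟫ +
      ⟪gradient (fun y => ⟪h y, gradient v y⟫) x, gradient u x⟫ -
      vdiv (fun y => ⟪gradient u y, gradient v y⟫ • h y) x := by
  have hhx : DifferentiableAt ℝ h x := hh.differentiable one_ne_zero x
  have hux : DifferentiableAt ℝ (gradient u) x := (hu.gradient le_rfl).differentiable one_ne_zero x
  have hvx : DifferentiableAt ℝ (gradient v) x := (hv.gradient le_rfl).differentiable one_ne_zero x
  rw [inner_Amat_apply, inner_gradient_inner_apply hhx hux, inner_gradient_inner_apply hhx hvx,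
    vdiv_smul (hux.inner ℝ hvx) hhx, fderiv_inner_apply ℝ hux hvx]
  have hessian_u := inner_fderiv_gradient_comm (hu.contDiffAt (x := x)) (h x) (gradient v x)
  have hessian_v := inner_fderiv_gradient_comm (hv.contDiffAt (x := x)) (h x) (gradient u x)
  linarith [real_inner_comm (gradient u x) (fderiv ℝ h x (gradient v x)),
    real_inner_comm (gradient u x) (fderiv ℝ (gradient v) x (h x))]
end
end

section
/- Let M be a d×d real matrix and let n ∈ ℝ^d be a unit vector. Then (i) the function γ : t ↦ det(I + tM) has derivative γ'(0) = tr M at t = 0, and (ii) the function γ_τ : t ↦ det(I + tM) · ‖((I + tM)⁻¹)ᵀ n‖ (defined for all t small enough that I + tM is invertible) has derivative γ_τ'(0) = tr M − ⟨M n, n⟩ at t = 0. (With M = Dh(x) the Jacobian of a C¹ deformation field h at a boundary point x with unit normal n, these are the derivatives γ'(0) = div h and γ_τ'(0) = div_τ h of the volume and surface Jacobians of the transport map T_t = Id + t h.) -/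
/-!
Expanding `det (1 + t • M) = 1 + t * tr M + O(t²)` gives the volume Jacobian. Inversion has
derivative `-M` at `1` in the direction `M`, so `t ↦ ((1 + t • M)⁻¹)ᵀ n` leaves `n` with velocity
`-Mᵀ n`; the norm of a curve through a unit vector `n` has derivative `⟪n, -Mᵀ n⟫ = -⟪M n, n⟫`,
and the product rule gives `tr M - ⟪M n, n⟫` for the surface Jacobian.
-/

open scoped RealInnerProductSpace
open Matrix

-- Only needed to differentiate matrix inversion; every norm induces the product topology.
attribute [local instance] Matrix.linftyOpNormedRing Matrix.linftyOpNormedAlgebra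

theorem HasDerivAt.norm {F : Type*} [NormedAddCommGroup F] [InnerProductSpace ℝ F]
    {f : ℝ → F} {f' : F} {x : ℝ} (hf : HasDerivAt f f' x) (h0 : f x ≠ 0) :
    HasDerivAt (‖f ·‖) (⟪f x, f'⟫ / ‖f x‖) x := by
  have h := hf.norm_sq.sqrt (by positivity)
  simp only [Real.sqrt_sq (norm_nonneg _)] at h
  convert h using 1
  field_simp

theorem hasDerivAt_ringInverse_one_add_smul {𝕜 R : Type*} [NontriviallyNormedField 𝕜]
    [NormedRing R] [NormedAlgebra 𝕜 R] [HasSummableGeomSeries R] (a : R) :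
    HasDerivAt (fun t : 𝕜 => Ring.inverse (1 + t • a)) (-a) 0 := by
  have hline : HasDerivAt (fun t : 𝕜 => 1 + t • a) a 0 := by
    simpa using ((hasDerivAt_id (0 : 𝕜)).smul_const a).const_add 1
  have hinv : HasFDerivAt Ring.inverse (-ContinuousLinearMap.mulLeftRight 𝕜 R 1 1)
      (1 + (0 : 𝕜) • a) := by
    simpa using hasFDerivAt_ringInverse (𝕜 := 𝕜) (1 : Rˣ)
  simpa [Function.comp_def] using hinv.comp_hasDerivAt 0 hline

section

variable {ι : Type*} [Fintype ι] [DecidableEq ι]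

theorem hasDerivAt_det_one_add_smul {R : Type*} [NontriviallyNormedField R] (M : Matrix ι ι R) :
    HasDerivAt (fun t : R => (1 + t • M).det) M.trace 0 := by
  set q := (det (1 + (Polynomial.X : Polynomial R) • M.map Polynomial.C)).divX.divX
  have hlin : HasDerivAt (fun t : R => 1 + M.trace * t) M.trace 0 := by
    simpa using ((hasDerivAt_id (0 : R)).const_mul M.trace).const_add 1
  have hquad : HasDerivAt (fun t : R => q.eval t * t ^ 2) 0 0 := by
    simpa using (q.hasDerivAt 0).fun_mul (hasDerivAt_pow 2 (0 : R))
  rw [funext fun t => det_one_add_smul t M]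
  simpa only [add_zero] using hlin.fun_add hquad

theorem Matrix.inner_toEuclideanLin_transpose_right (M : Matrix ι ι ℝ)
    (v w : EuclideanSpace ℝ ι) : ⟪v, toEuclideanLin Mᵀ w⟫ = ⟪toEuclideanLin M v, w⟫ := by
  rw [← conjTranspose_eq_transpose_of_trivial, toEuclideanLin_conjTranspose_eq_adjoint,
    LinearMap.adjoint_inner_right]

theorem hasDerivAt_toEuclideanLin_transpose_inv_one_add_smul (M : Matrix ι ι ℝ)
    (v : EuclideanSpace ℝ ι) :
    HasDerivAt (fun t : ℝ => toEuclideanLin ((1 + t • M)⁻¹)ᵀ v) (-toEuclideanLin Mᵀ v) 0 := by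
  let L : Matrix ι ι ℝ →ₗ[ℝ] EuclideanSpace ℝ ι :=
    LinearMap.applyₗ v ∘ₗ toEuclideanLin.toLinearMap ∘ₗ (transposeLinearEquiv ι ι ℝ ℝ).toLinearMap
  have hL (B : Matrix ι ι ℝ) : L B = toEuclideanLin Bᵀ v := rfl
  have h := L.toContinuousLinearMap.hasFDerivAt.comp_hasDerivAt 0
    (hasDerivAt_ringInverse_one_add_smul (𝕜 := ℝ) M)
  simp only [LinearMap.coe_toContinuousLinearMap', Function.comp_def, hL,
    ← nonsing_inv_eq_ringInverse] at h
  exact h.congr_deriv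
    (show L (-M) = _ by rw [hL, transpose_neg, map_neg, LinearMap.neg_apply])

theorem hasDerivAt_det_mul_norm_toEuclideanLin_transpose_inv (M : Matrix ι ι ℝ)
    {v : EuclideanSpace ℝ ι} (hv : ‖v‖ = 1) :
    HasDerivAt (fun t : ℝ => (1 + t • M).det * ‖toEuclideanLin ((1 + t • M)⁻¹)ᵀ v‖)
      (M.trace - ⟪toEuclideanLin M v, v⟫) 0 := by
  have hv0 : toEuclideanLin ((1 + (0 : ℝ) • M)⁻¹)ᵀ v = v := by simp
  have hnorm := (hasDerivAt_toEuclideanLin_transpose_inv_one_add_smul M v).norm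
    (by rw [hv0, ← norm_ne_zero_iff, hv]; exact one_ne_zero)
  refine ((hasDerivAt_det_one_add_smul M).fun_mul hnorm).congr_deriv ?_
  rw [hv0, hv, inner_neg_right, inner_toEuclideanLin_transpose_right, zero_smul, add_zero, det_one]
  ring

end

theorem statement3 {d : ℕ} (M : Matrix (Fin d) (Fin d) ℝ)
    (n : EuclideanSpace ℝ (Fin d)) (hn : ‖n‖ = 1) :
    -- (i) derivative of the volume Jacobian `γ(t) = det(I + tM)` at `t = 0`
    HasDerivAt (fun t : ℝ => ((1 : Matrix (Fin d) (Fin d) ℝ) + t • M).det) M.trace 0 ∧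
    -- (ii) derivative of the surface Jacobian
    -- `γ_τ(t) = det(I + tM) · ‖((I + tM)⁻¹)ᵀ n‖` at `t = 0`
    HasDerivAt
      (fun t : ℝ =>
        ((1 : Matrix (Fin d) (Fin d) ℝ) + t • M).det *
          ‖Matrix.toEuclideanLin ((((1 : Matrix (Fin d) (Fin d) ℝ) + t • M)⁻¹)ᵀ) n‖)
      (M.trace - ⟪Matrix.toEuclideanLin M n, n⟫) 0 :=
  ⟨hasDerivAt_det_one_add_smul M, hasDerivAt_det_mul_norm_toEuclideanLin_transpose_inv M hn⟩
end

section
/- Let N : ℝ^d → ℝ^d be differentiable at a point x with n = N(x) a unit vector, and suppose the Jacobian DN(x) is symmetric and DN(x) n = 0. Let h : ℝ^d → ℝ^d be differentiable at x. Then the tangential part of the gradient of y ↦ ⟨h(y), N(y)⟩ at x satisfies ∇_τ(⟨h, N⟩)(x) = (Dh(x)ᵀ n − ⟨Dh(x)ᵀ n, n⟩ n) + DN(x) (h(x) − ⟨h(x), n⟩ n); in short, ∇_τ(h·N) = (Dhᵀ n)_τ + DN h_τ. (This identity is the algebraic content relating the material derivative ṅ = −∇_τ(h·n) + Dn h_τ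 and the shape derivative n' = −∇_τ(h·n) of the unit normal under the perturbation Id + t h, where N is a unitary extension of the normal, e.g. the gradient of the signed distance function, and DN is its second fundamental form.) -/
/-! The gradient of `⟨h, N⟩` is `Dhᵀ N + DNᵀ h`; since `DN` is symmetric this is `Dhᵀ n + DN h`.
Taking tangential parts, `⟨DN h, n⟩ = ⟨h, DN n⟩ = 0` and `DN (⟨h, n⟩ n) = 0`, so the
normal component of `h` drops out of the second term. -/

open scoped RealInnerProductSpace

noncomputable section

section

variable {F : Type*} [NormedAddCommGroup F] [InnerProductSpace ℝ F]

def tangentialPart (n w : F) : F := w - ⟪w, n⟫ • n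

theorem tangentialPart_add_apply {B : F →L[ℝ] F} (hB : (B : F →ₗ[ℝ] F).IsSymmetric)
    {n : F} (hBn : B n = 0) (a u : F) :
    tangentialPart n (a + B u) = tangentialPart n a + B (tangentialPart n u) := by
  have hBu : ⟪B u, n⟫ = 0 := by
    calc ⟪B u, n⟫ = ⟪u, B n⟫ := hB u n
      _ = 0 := by rw [hBn, inner_zero_right]
  simp only [tangentialPart, map_sub, map_smul, hBn, smul_zero, sub_zero, inner_add_left, hBu,
    add_zero]
  abel

theorem HasFDerivAt.hasGradientAt_inner [CompleteSpace F] {f g : F → F} {A B : F →L[ℝ] F} {x : F}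
    (hf : HasFDerivAt f A x) (hg : HasFDerivAt g B x) :
    HasGradientAt (fun y => ⟪f y, g y⟫) (A.adjoint (g x) + B.adjoint (f x)) x := by
  rw [hasGradientAt_iff_hasFDerivAt]
  refine (hf.inner ℝ hg).congr_fderiv (ContinuousLinearMap.ext fun w => ?_)
  simp only [fderivInnerCLM_apply, InnerProductSpace.toDual_apply_apply,
    ContinuousLinearMap.comp_apply, ContinuousLinearMap.prod_apply, inner_add_left,
    ContinuousLinearMap.adjoint_inner_left, real_inner_comm (g x)]
  exact add_comm _ _

end

theorem statement7_general {d : ℕ} (N h : E d → E d) (x : E d)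
    (hN : DifferentiableAt ℝ N x) (hh : DifferentiableAt ℝ h x)
    (hsym : ∀ w z : E d, ⟪fderiv ℝ N x w, z⟫ = ⟪w, fderiv ℝ N x z⟫)
    (hker : fderiv ℝ N x (N x) = 0) :
    gradient (fun y => ⟪h y, N y⟫) x
        - ⟪gradient (fun y => ⟪h y, N y⟫) x, N x⟫ • N x =
      (ContinuousLinearMap.adjoint (fderiv ℝ h x) (N x)
          - ⟪ContinuousLinearMap.adjoint (fderiv ℝ h x) (N x), N x⟫ • N x)
        + fderiv ℝ N x (h x - ⟪h x, N x⟫ • N x) := by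
  have hgrad := hh.hasFDerivAt.hasGradientAt_inner hN.hasFDerivAt
  rw [LinearMap.IsSymmetric.clm_adjoint_eq hsym] at hgrad
  rw [hgrad.gradient]
  exact tangentialPart_add_apply hsym hker _ _

/-- With `n = N(x)` a unit vector, `DN(x)` symmetric and `DN(x) n = 0`,
`∇_τ(⟨h, N⟩)(x) = (Dh(x)ᵀ n)_τ + DN(x) h_τ(x)`, where `w_τ = w − ⟨w, n⟩ n`. -/
theorem statement7 {d : ℕ} (N h : E d → E d) (x : E d)
    (hN : DifferentiableAt ℝ N x) (hh : DifferentiableAt ℝ h x)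
    (hn : ‖N x‖ = 1)
    (hsym : ∀ w z : E d, ⟪fderiv ℝ N x w, z⟫ = ⟪w, fderiv ℝ N x z⟫)
    (hker : fderiv ℝ N x (N x) = 0) :
    gradient (fun y => ⟪h y, N y⟫) x
        - ⟪gradient (fun y => ⟪h y, N y⟫) x, N x⟫ • N x =
      (ContinuousLinearMap.adjoint (fderiv ℝ h x) (N x)
          - ⟪ContinuousLinearMap.adjoint (fderiv ℝ h x) (N x), N x⟫ • N x)
        + fderiv ℝ N x (h x - ⟪h x, N x⟫ • N x) :=
  statement7_general N h x hN hh hsym hker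
end
end
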